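/- arXiv:2103.14825 — 5 statements merged into one kernel-verified Lean document; each statement's English description precedes it below -/
import Mathlib

section
/- Let R be a ring and A = A₁ ⊕ ⋯ ⊕ Aₙ an R-module which is a finite direct sum of simple submodules A₁, …, Aₙ. If the annihilators Ann_R(Aᵢ) are pairwise distinct two-sided (or left) ideals, i.e. Ann_R(Aᵢ) ≠ Ann_R(Aⱼ) for i ≠ j, then A is a cyclic R-module. -/
section Aux

variable {R : Type*} [Ring R] {A : Type*} [AddCommGroup A] [Module R A]

private lemma sub_simple {S T : Submodule R A} (h : IsSimpleModule R S) (hle : T ≤ S) :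
    T = ⊥ ∨ T = S := by
  rcases eq_bot_or_eq_top (Submodule.comap S.subtype T) with h' | h'
  · left
    have h2 := congrArg (Submodule.map S.subtype) h'
    rwa [Submodule.map_comap_subtype, Submodule.map_bot, inf_eq_right.mpr hle] at h2
  · right
    have h2 := congrArg (Submodule.map S.subtype) h'
    rwa [Submodule.map_comap_subtype, Submodule.map_top, Submodule.range_subtype,
      inf_eq_right.mpr hle] at h2

private lemma simple_ne_bot {S : Submodule R A} (h : IsSimpleModule R S) : S ≠ ⊥ := by
  intro hbot
  subst hbot
  exact (not_nontrivial _) h.1.1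

private lemma aux : ∀ (n : ℕ) (Aj : Fin n → Submodule R A),
    (∀ j, IsSimpleModule R (Aj j)) →
    (∀ i j, i ≠ j →
      {x : R | ∀ a ∈ Aj i, x • a = 0} ≠ {x : R | ∀ a ∈ Aj j, x • a = 0}) →
    ∃ a : A, Submodule.span R {a} = ⨆ j, Aj j := by
  intro n
  induction n with
  | zero =>
    intro Aj _ _
    exact ⟨0, by rw [Submodule.span_zero_singleton]; exact (iSup_of_empty Aj).symm⟩
  | succ n IH =>
    intro Aj hsimple hann
    obtain ⟨b, hb⟩ := IH (fun i => Aj i.castSucc) (fun i => hsimple _)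
      (fun i j hij => hann _ _ (fun h => hij (Fin.castSucc_injective n h)))
    set S := Aj (Fin.last n) with hSdef
    have hSbot : S ≠ ⊥ := simple_ne_bot (hsimple _)
    obtain ⟨s, hsS, hs0⟩ := Submodule.exists_mem_ne_zero_of_ne_bot hSbot
    refine ⟨b + s, ?_⟩
    set N := Submodule.span R {b + s} with hNdef
    have hmemN : ∀ r : R, r • (b + s) ∈ N :=
      fun r => Submodule.smul_mem _ r (Submodule.mem_span_singleton_self _)
    -- Key: S ≤ N
    have hSN : S ≤ N := by
      rcases sub_simple (hsimple (Fin.last n)) (inf_le_left : S ⊓ N ≤ S) with hbot | htop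
      · exfalso
        -- well-definedness of the "Goursat" correspondence
        have wd : ∀ r : R, r • b = 0 → r • s = 0 := by
          intro r h
          have h1 : r • s ∈ S ⊓ N := by
            refine ⟨Submodule.smul_mem _ r hsS, ?_⟩
            have : r • (b + s) = r • s := by rw [smul_add, h, zero_add]
            exact this ▸ hmemN r
          rw [hbot, Submodule.mem_bot] at h1
          exact h1
        -- the submodule K = {r•b | r•s = 0}
        set K : Submodule R A :=
          { carrier := {x | ∃ r : R, r • b = x ∧ r • s = 0}
            add_mem' := by
              rintro x y ⟨r, hr, hr0⟩ ⟨t, ht, ht0⟩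
              exact ⟨r + t, by rw [add_smul, hr, ht], by rw [add_smul, hr0, ht0, add_zero]⟩
            zero_mem' := ⟨0, by simp, by simp⟩
            smul_mem' := by
              rintro c x ⟨r, hr, hr0⟩
              exact ⟨c * r, by rw [mul_smul, hr], by rw [mul_smul, hr0, smul_zero]⟩ } with hKdef
        -- some A_i is not contained in K
        have hstep : ∃ i : Fin n, ¬ Aj i.castSucc ≤ K := by
          by_contra hcon
          push_neg at hcon
          have hbK : b ∈ K := by
            have : Submodule.span R {b} ≤ K := hb ▸ iSup_le hcon
            exact this (Submodule.mem_span_singleton_self b)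
          obtain ⟨r, hrb, hrs⟩ := hbK
          have h1 : (r - 1) • b = 0 := by rw [sub_smul, one_smul, hrb, sub_self]
          have h2 := wd _ h1
          rw [sub_smul, one_smul, hrs, zero_sub, neg_eq_zero] at h2
          exact hs0 h2
        obtain ⟨i, hiK⟩ := hstep
        obtain ⟨z, hz, hzK⟩ := Set.not_subset.mp hiK
        have hzB : z ∈ Submodule.span R {b} := by
          rw [hb]; exact Submodule.mem_iSup_of_mem i hz
        obtain ⟨r₀, hr₀⟩ := Submodule.mem_span_singleton.mp hzB
        have hr₀s : r₀ • s ≠ 0 := fun h => hzK ⟨r₀, hr₀, h⟩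
        -- the submodule J = {r•s | r•b ∈ A_i} equals S
        set J : Submodule R A :=
          { carrier := {x | ∃ r : R, r • s = x ∧ r • b ∈ Aj i.castSucc}
            add_mem' := by
              rintro x y ⟨r, hr, hr'⟩ ⟨t, ht, ht'⟩
              exact ⟨r + t, by rw [add_smul, hr, ht],
                by rw [add_smul]; exact Submodule.add_mem _ hr' ht'⟩
            zero_mem' := ⟨0, by simp, by simp⟩
            smul_mem' := by
              rintro c x ⟨r, hr, hr'⟩
              exact ⟨c * r, by rw [mul_smul, hr],
                by rw [mul_smul]; exact Submodule.smul_mem _ c hr'⟩ } with hJdef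
        have hJS : J ≤ S := by
          rintro x ⟨r, hr, -⟩
          exact hr ▸ Submodule.smul_mem _ r hsS
        have hJeq : J = S := by
          rcases sub_simple (hsimple (Fin.last n)) hJS with hJ | hJ
          · exfalso
            have hmem : r₀ • s ∈ J := ⟨r₀, rfl, by rw [hr₀]; exact hz⟩
            rw [hJ, Submodule.mem_bot] at hmem
            exact hr₀s hmem
          · exact hJ
        -- annihilators coincide, contradiction
        refine hann i.castSucc (Fin.last n) (Fin.castSucc_lt_last i).ne ?_
        ext x
        constructor
        · intro hx t ht
          have ht2 : t ∈ J := by rw [hJeq, hSdef]; exact ht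
          obtain ⟨r, hrs, hrb⟩ := ht2
          have h1 : (x * r) • b = 0 := by rw [mul_smul]; exact hx _ hrb
          have h2 := wd _ h1
          rwa [mul_smul, hrs] at h2
        · intro hx z' hz'
          have hz'B : z' ∈ Submodule.span R {b} := by
            rw [hb]; exact Submodule.mem_iSup_of_mem i hz'
          obtain ⟨r, hr⟩ := Submodule.mem_span_singleton.mp hz'B
          have hxz'K : x • z' ∈ K ⊓ Aj i.castSucc := by
            constructor
            · exact ⟨x * r, by rw [mul_smul, hr],
                by rw [mul_smul]; exact hx _ (Submodule.smul_mem _ r hsS)⟩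
            · exact Submodule.smul_mem _ x hz'
          rcases sub_simple (hsimple i.castSucc) (inf_le_right : K ⊓ Aj i.castSucc ≤ _)
            with hK' | hK'
          · rw [hK', Submodule.mem_bot] at hxz'K; exact hxz'K
          · exfalso
            apply hiK
            intro y hy
            rw [← hK'] at hy
            exact hy.1
      · intro x hx
        exact (htop ▸ hx : x ∈ S ⊓ N).2
    -- assemble
    have hsplit : (⨆ j, Aj j) = Submodule.span R {b} ⊔ S := by
      rw [hb]
      refine le_antisymm (iSup_le fun j => ?_) ?_
      · refine Fin.lastCases ?_ (fun i => ?_) j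
        · exact le_sup_right
        · exact le_trans (le_iSup (fun i : Fin n => Aj i.castSucc) i) le_sup_left
      · exact sup_le (iSup_le fun i => le_iSup Aj i.castSucc) (le_iSup Aj (Fin.last n))
    rw [hsplit]
    refine le_antisymm ?_ ?_
    · rw [Submodule.span_le, Set.singleton_subset_iff]
      exact Submodule.add_mem _ (le_sup_left (a := Submodule.span R {b})
        (Submodule.mem_span_singleton_self b)) (le_sup_right (b := S) hsS)
    · have hbN : b ∈ N := by
        have : (b + s) - s ∈ N :=
          Submodule.sub_mem _ (Submodule.mem_span_singleton_self _) (hSN hsS)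
        rwa [add_sub_cancel_right] at this
      refine sup_le ?_ hSN
      rw [Submodule.span_le, Set.singleton_subset_iff]
      exact hbN

end Aux

/-- If `A` is an internal finite direct sum of simple submodules whose annihilators
are pairwise distinct, then `A` is cyclic. -/
theorem stmt3 (R : Type*) [Ring R] (A : Type*) [AddCommGroup A] [Module R A]
    (n : ℕ) (Aj : Fin n → Submodule R A)
    (hsimple : ∀ j, IsSimpleModule R (Aj j))
    (hindep : iSupIndep Aj) (hsum : (⨆ j, Aj j) = ⊤)
    (hann : ∀ i j, i ≠ j →
      {x : R | ∀ a ∈ Aj i, x • a = 0} ≠ {x : R | ∀ a ∈ Aj j, x • a = 0}) :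
    ∃ a : A, Submodule.span R {a} = ⊤ := by
  obtain ⟨a, ha⟩ := aux n Aj hsimple hann
  exact ⟨a, hsum ▸ ha⟩
end

section
/- Let R be a ring and A a semisimple R-module which is a finite direct sum of simple submodules, with homogeneous (isotypic) components E₁, …, E_k. Then the special rank of A equals the maximum of the special ranks of the Eⱼ; equivalently, every finitely generated submodule of A can be generated by at most max_j sr(Eⱼ) elements and this bound is attained. -/
/-- A module has special rank `r` if every finitely generated submodule can be generated by at
most `r` elements, and some finitely generated submodule cannot be generated by fewer than `r`
elements. -/
def HasSpecialRank (R : Type*) (M : Type*) [Ring R] [AddCommGroup M] [Module R M]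
    (r : ℕ) : Prop :=
  (∀ N : Submodule R M, N.FG →
    ∃ S : Finset M, S.card ≤ r ∧ Submodule.span R (S : Set M) = N) ∧
  ∃ N : Submodule R M, N.FG ∧
    ∀ S : Finset M, Submodule.span R (S : Set M) = N → r ≤ S.card

section Aux

variable {R : Type*} [Ring R] {A : Type*} [AddCommGroup A] [Module R A]

/-- If an atom maps nontrivially into an atom under a linear endomorphism,
the two are isomorphic. -/
lemma aux_equiv_of_map {T B : Submodule R A} (hT : IsAtom T) (hB : IsAtom B)
    (f : A →ₗ[R] A) (hle : T.map f ≤ B) (hne : T.map f ≠ ⊥) :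
    Nonempty (T ≃ₗ[R] B) := by
  have hTsimple : IsSimpleModule R T := isSimpleModule_iff_isAtom.2 hT
  set g : T →ₗ[R] A := f ∘ₗ T.subtype with hg
  have hrange : LinearMap.range g = T.map f := by
    rw [hg, LinearMap.range_comp, Submodule.range_subtype]
  have hker : LinearMap.ker g = ⊥ := by
    rcases eq_bot_or_eq_top (LinearMap.ker g) with h | h
    · exact h
    · exact absurd (by rw [← hrange, LinearMap.ker_eq_top.mp h, LinearMap.range_zero]) hne
  have hmapB : T.map f = B := by
    rcases (hB.le_iff.mp hle) with h | h
    · exact absurd h hne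
    · exact h
  exact ⟨(LinearEquiv.ofInjective g (LinearMap.ker_eq_bot.mp hker)).trans
    (LinearEquiv.ofEq _ _ (hrange.trans hmapB))⟩

end Aux

open DirectSum in
/-- For a semisimple module `A` which is a finite direct sum of simple submodules,
with homogeneous (isotypic) components `E 0, …, E (k-1)`, the special rank of `A` equals the
maximum of the special ranks of the homogeneous components. -/
theorem stmt7 (R : Type*) [Ring R] (A : Type*) [AddCommGroup A] [Module R A]
    (n k : ℕ) (Aj : Fin n → Submodule R A)
    (hsimple : ∀ j, IsSimpleModule R (Aj j))
    (hindep : iSupIndep Aj) (hsum : (⨆ j, Aj j) = ⊤)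
    (c : Fin n → Fin k)
    (hc : ∀ i j, c i = c j ↔ Nonempty ((Aj i) ≃ₗ[R] (Aj j)))
    (E : Fin k → Submodule R A)
    (hE : ∀ m, E m = ⨆ i ∈ {i : Fin n | c i = m}, Aj i)
    (rk : Fin k → ℕ)
    (hrk : ∀ m, HasSpecialRank R (E m) (rk m)) :
    HasSpecialRank R A (Finset.univ.sup rk) := by
  classical
  have hatom : ∀ i, IsAtom (Aj i) := fun i => isSimpleModule_iff_isAtom.1 (hsimple i)
  have internal : DirectSum.IsInternal Aj :=
    DirectSum.isInternal_submodule_of_iSupIndep_of_iSup_eq_top hindep hsum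
  set e : (⨁ i, Aj i) ≃ₗ[R] A :=
    LinearEquiv.ofBijective (DirectSum.coeLinearMap Aj) internal with he
  set π : Fin n → A →ₗ[R] A := fun i =>
    (Aj i).subtype ∘ₗ (DirectSum.component R (Fin n) (fun i => Aj i) i) ∘ₗ
      (e.symm : A →ₗ[R] (⨁ i, Aj i)) with hπ
  have hπ_mem : ∀ i a, π i a ∈ Aj i := fun i a => by
    simp only [hπ, LinearMap.comp_apply]
    exact Submodule.coe_mem _
  have hπ_apply : ∀ (i : Fin n) (a : A), π i a = ((e.symm a) i : A) := fun i a => rfl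
  have hπ_same : ∀ (i : Fin n) (x : A) (_ : x ∈ Aj i), π i x = x := fun i x hx => by
    rw [hπ_apply, internal.ofBijective_coeLinearMap_of_mem hx]
  have hπ_ne : ∀ (i j : Fin n) (_ : i ≠ j) (x : A) (_ : x ∈ Aj i), π j x = 0 := by
    intro i j hij x hx
    rw [hπ_apply, internal.ofBijective_coeLinearMap_of_mem_ne hij hx, Submodule.coe_zero]
  have hπ_sum : ∀ a : A, ∑ i, π i a = a := by
    intro a
    conv_rhs => rw [← e.apply_symm_apply a, ← DirectSum.sum_univ_of (e.symm a)]
    rw [map_sum]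
    refine Finset.sum_congr rfl fun i _ => ?_
    rw [hπ_apply, he]
    exact (DirectSum.coeLinearMap_of ..).symm
  -- the projections onto the homogeneous components
  set ρ : Fin k → A →ₗ[R] A := fun m => ∑ i ∈ Finset.univ.filter (fun i => c i = m), π i
    with hρ
  have hρ_apply : ∀ m a, ρ m a = ∑ i ∈ Finset.univ.filter (fun i => c i = m), π i a := by
    intro m a
    rw [hρ]
    simp [LinearMap.sum_apply]
  have hρ_sum : ∀ a : A, ∑ m, ρ m a = a := by
    intro a
    simp_rw [hρ_apply]
    rw [Finset.sum_fiberwise Finset.univ c (fun i => π i a)]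
    exact hπ_sum a
  -- behaviour of ρ on basic pieces
  have hρ_on_Aj : ∀ (m : Fin k) (i : Fin n) (x : A) (_ : x ∈ Aj i),
      ρ m x = if c i = m then x else 0 := by
    intro m i x hx
    rw [hρ_apply]
    have hterm : ∀ i' ∈ Finset.univ.filter (fun i' => c i' = m),
        π i' x = if i' = i then x else 0 := by
      intro i' _
      by_cases h : i' = i
      · subst h; simp [hπ_same i' x hx]
      · simp [h, hπ_ne i i' (Ne.symm h) x hx]
    rw [Finset.sum_congr rfl hterm, Finset.sum_ite_eq' _ i (fun _ => x)]
    simp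
  -- ρ m on E m' is the identity if m = m' and zero otherwise
  have hρ_on_E : ∀ (m m' : Fin k) (x : A) (_ : x ∈ E m'),
      ρ m x = if m = m' then x else 0 := by
    intro m m' x hx
    set f : A →ₗ[R] A := if m = m' then LinearMap.id else 0 with hf
    have hEker : E m' ≤ LinearMap.ker (ρ m - f) := by
      rw [hE m']
      refine iSup₂_le fun i hi => fun w hw => ?_
      have hci : c i = m' := hi
      simp only [LinearMap.mem_ker, LinearMap.sub_apply]
      rw [hρ_on_Aj m i w hw, hci, hf]
      by_cases h : m = m'
      · simp [h, eq_comm]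
      · simp only [if_neg h, LinearMap.zero_apply, sub_zero]
        exact if_neg (fun hh : m' = m => h hh.symm)
    have := hEker hx
    simp only [LinearMap.mem_ker, LinearMap.sub_apply, sub_eq_zero] at this
    rw [this, hf]
    by_cases h : m = m' <;> simp [h]
  -- range of ρ m is inside E m
  have hρ_mem : ∀ (m : Fin k) (a : A), ρ m a ∈ E m := by
    intro m a
    rw [hρ_apply]
    refine Submodule.sum_mem _ fun i hi => ?_
    rw [Finset.mem_filter] at hi
    have : Aj i ≤ E m := by
      rw [hE m]; exact le_biSup _ hi.2
    exact this (hπ_mem i a)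
  -- every atom lies in a homogeneous component
  have hatomE : ∀ T : Submodule R A, IsAtom T → ∃ m, T ≤ E m := by
    intro T hT
    have hmaple : ∀ i, T.map (π i) ≤ Aj i := by
      intro i
      rw [Submodule.map_le_iff_le_comap]
      exact fun x _ => hπ_mem i x
    have hex : ∃ i, T.map (π i) ≠ ⊥ := by
      by_contra h
      push_neg at h
      apply hT.1
      rw [eq_bot_iff]
      intro t ht
      have hz : ∀ i, π i t = 0 := fun i => by
        have hmem : π i t ∈ T.map (π i) := Submodule.mem_map_of_mem ht
        rw [h i] at hmem
        exact hmem
      have ht0 : t = 0 := by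
        rw [← hπ_sum t]
        simp [hz]
      rw [ht0]
      exact Submodule.zero_mem ⊥
    obtain ⟨i₀, hi₀⟩ := hex
    have hiso₀ : Nonempty (T ≃ₗ[R] Aj i₀) :=
      aux_equiv_of_map hT (hatom i₀) (π i₀) (hmaple i₀) hi₀
    refine ⟨c i₀, fun t ht => ?_⟩
    have hzero : ∀ i, c i ≠ c i₀ → π i t = 0 := by
      intro i hci
      by_cases h : T.map (π i) = ⊥
      · have : π i t ∈ T.map (π i) := Submodule.mem_map_of_mem ht
        rw [h] at this
        exact this
      · exfalso
        have hiso : Nonempty (T ≃ₗ[R] Aj i) :=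
          aux_equiv_of_map hT (hatom i) (π i) (hmaple i) h
        exact hci ((hc i i₀).2 ⟨hiso.some.symm.trans hiso₀.some⟩)
    have : t = ∑ i, π i t := (hπ_sum t).symm
    rw [this]
    refine Submodule.sum_mem _ fun i _ => ?_
    by_cases h : c i = c i₀
    · have : Aj i ≤ E (c i₀) := by
        rw [hE (c i₀)]; exact le_biSup _ h
      exact this (hπ_mem i t)
    · rw [hzero i h]; exact Submodule.zero_mem _
  -- the lattice of submodules is atomistic
  have hsemisimple : IsSemisimpleModule R A := by
    apply IsSemisimpleModule.of_sSup_simples_eq_top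
    rw [eq_top_iff, ← hsum]
    exact iSup_le fun i => le_sSup (hsimple i)
  have hatomistic : ∀ W : Submodule R A, sSup { a : Submodule R A | IsAtom a ∧ a ≤ W } = W :=
    fun W => sSup_atoms_le_eq W
  -- decomposition of any submodule along homogeneous components
  have hdecomp : ∀ W : Submodule R A, W ≤ ⨆ m, W ⊓ E m := by
    intro W
    conv_lhs => rw [← hatomistic W]
    refine sSup_le fun a ⟨ha, haW⟩ => ?_
    obtain ⟨m, hm⟩ := hatomE a ha
    exact le_trans (le_inf haW hm) (le_iSup (fun m => W ⊓ E m) m)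
  -- homogeneous projections preserve every submodule
  have hinv : ∀ (W : Submodule R A) (m : Fin k), W.map (ρ m) ≤ W := by
    intro W m
    conv_lhs => rw [← hatomistic W]
    rw [sSup_eq_iSup', Submodule.map_iSup]
    refine iSup_le fun ⟨a, ha, haW⟩ => ?_
    obtain ⟨m', hm'⟩ := hatomE a ha
    refine le_trans ?_ haW
    rw [Submodule.map_le_iff_le_comap]
    intro x hx
    have : ρ m x = if m = m' then x else 0 := hρ_on_E m m' x (hm' hx)
    simp only [Submodule.mem_comap, this]
    by_cases h : m = m' <;> simp [h, hx]
  haveI hnoeth : IsNoetherian R A := by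
    have h1 : ∀ i, IsNoetherian R (Aj i) := fun i => by
      have := hsimple i; infer_instance
    have h2 : IsNoetherian R ((⨆ i, Aj i : Submodule R A) : Submodule R A) := isNoetherian_iSup
    rw [hsum] at h2
    exact isNoetherian_top_iff.mp h2
  constructor
  · -- upper bound: every f.g. (indeed every) submodule needs at most `sup rk` generators
    intro N _
    have hfg : ∀ m : Fin k, (N.comap (E m).subtype).FG := fun m => IsNoetherian.noetherian _
    choose S hScard hSspan using fun m => (hrk m).1 _ (hfg m)
    set T : Fin k → Finset A := fun m => (S m).image ((↑) : E m → A) with hT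
    have hTcard : ∀ m, (T m).card ≤ Finset.univ.sup rk := fun m =>
      le_trans Finset.card_image_le (le_trans (hScard m) (Finset.le_sup (Finset.mem_univ m)))
    have hTspan : ∀ m, Submodule.span R ((T m) : Set A) = N ⊓ E m := by
      intro m
      rw [hT]
      simp only [Finset.coe_image]
      rw [← Submodule.coe_subtype, ← Submodule.map_span, hSspan m,
        Submodule.map_comap_subtype, inf_comm]
    set g : (m : Fin k) → (T m) → Fin (Finset.univ.sup rk) := fun m t =>
      Fin.castLE (hTcard m) ((T m).equivFin t) with hg
    have hginj : ∀ m, Function.Injective (g m) := fun m =>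
      (Fin.castLE_injective (hTcard m)).comp (T m).equivFin.injective
    set x : (m : Fin k) → Fin (Finset.univ.sup rk) → A := fun m =>
      Function.extend (g m) (fun t => (t : A)) (fun _ => 0) with hx
    have hx_mem : ∀ m i, x m i ∈ N ⊓ E m := by
      intro m i
      rw [hx]
      dsimp only
      rw [Function.extend_def]
      split
      · rename_i h
        rw [← hTspan m]
        exact Submodule.subset_span (Finset.mem_coe.mpr h.choose.2)
      · exact Submodule.zero_mem _
    have hx_surj : ∀ m, ∀ t, (ht : t ∈ T m) → x m (g m ⟨t, ht⟩) = t := by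
      intro m t ht
      rw [hx]
      dsimp only
      rw [(hginj m).extend_apply]
    set y : Fin (Finset.univ.sup rk) → A := fun i => ∑ m, x m i with hy
    refine ⟨Finset.image y Finset.univ, le_trans Finset.card_image_le (by simp), ?_⟩
    apply le_antisymm
    · rw [Submodule.span_le]
      intro s hs
      rw [Finset.coe_image] at hs
      obtain ⟨i, _, rfl⟩ := hs
      exact Submodule.sum_mem _ fun m _ => (hx_mem m i).1
    · refine le_trans (hdecomp N) (iSup_le fun m => ?_)
      rw [← hTspan m, Submodule.span_le]
      intro t ht
      rw [Finset.mem_coe] at ht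
      have hxit : x m (g m ⟨t, ht⟩) = t := hx_surj m t ht
      set i := g m ⟨t, ht⟩
      have hyi : y i ∈ Submodule.span R ((Finset.image y Finset.univ : Finset A) : Set A) :=
        Submodule.subset_span (by
          rw [Finset.coe_image]
          exact ⟨i, Finset.mem_coe.mpr (Finset.mem_univ i), rfl⟩)
      have hxy : ρ m (y i) = x m i := by
        rw [hy]
        dsimp only
        rw [map_sum]
        have hterm : ∀ m' ∈ Finset.univ, ρ m (x m' i) = if m = m' then x m' i else 0 :=
          fun m' _ => hρ_on_E m m' _ (hx_mem m' i).2
        rw [Finset.sum_congr rfl hterm, Finset.sum_ite_eq Finset.univ m (fun m' => x m' i)]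
        simp
      rw [← hxit, ← hxy]
      exact hinv _ m (Submodule.mem_map_of_mem hyi)
  · -- the bound is attained
    by_cases hk : k = 0
    · subst hk
      refine ⟨⊥, Submodule.fg_bot, fun S _ => ?_⟩
      simp [Finset.univ_eq_empty]
    · haveI : Nonempty (Fin k) := Fin.pos_iff_nonempty.mp (Nat.pos_of_ne_zero hk)
      obtain ⟨m₀, -, hm₀⟩ := Finset.exists_mem_eq_sup Finset.univ Finset.univ_nonempty rk
      obtain ⟨N₀, hN₀fg, hN₀⟩ := (hrk m₀).2
      refine ⟨N₀.map (E m₀).subtype, hN₀fg.map _, fun S hS => ?_⟩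
      have hSsub : ∀ s ∈ S, s ∈ E m₀ := by
        intro s hs
        have h1 : s ∈ Submodule.span R (S : Set A) := Submodule.subset_span hs
        rw [hS] at h1
        exact Submodule.map_subtype_le _ _ h1
      set S' : Finset (E m₀) := S.attach.image (fun s => (⟨s.1, hSsub s.1 s.2⟩ : E m₀))
        with hS'
      have hcoe : ((↑) : E m₀ → A) '' (S' : Set (E m₀)) = (S : Set A) := by
        ext a
        constructor
        · rintro ⟨b, hb, rfl⟩
          rw [hS'] at hb
          rw [Finset.mem_coe, Finset.mem_image] at hb
          obtain ⟨s, _, rfl⟩ := hb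
          exact s.2
        · intro ha
          rw [Finset.mem_coe] at ha
          exact ⟨⟨a, hSsub a ha⟩, by
            rw [hS', Finset.mem_coe, Finset.mem_image]
            exact ⟨⟨a, ha⟩, S.mem_attach _, rfl⟩, rfl⟩
      have hspan' : Submodule.span R (S' : Set (E m₀)) = N₀ := by
        apply Submodule.map_injective_of_injective (E m₀).injective_subtype
        rw [Submodule.map_span, Submodule.coe_subtype, hcoe, hS]
      calc Finset.univ.sup rk = rk m₀ := hm₀
        _ ≤ S'.card := hN₀ S' hspan'
        _ ≤ S.attach.card := Finset.card_image_le
        _ = S.card := Finset.card_attach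
end

section
/- Let R be an integral domain of characteristic 0 with field of fractions F, G a finite group, and A a right RG-module that is torsion-free as an R-module. If A has finite special rank r as an RG-module, then the FG-module A ⊗_R F has special rank at most r. -/
/-- Let `R` be an integral domain of characteristic `0` with field of fractions
`F`, `G` a finite group and `A` an `R`-torsion-free `RG`-module of special rank at most `r`.
Then the `FG`-module `B = A ⊗_R F` (characterized here by an `R`-linear, `G`-equivariant
injection `f : A → B` whose image generates `B` up to denominators from `R`) has special rank
at most `r`. -/
theorem stmt10 (R : Type*) [CommRing R] [IsDomain R] [CharZero R]
    (G : Type*) [Group G] [Finite G]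
    (F : Type*) [Field F] [Algebra R F] [IsFractionRing R F]
    (A : Type*) [AddCommGroup A] [Module (MonoidAlgebra R G) A]
    [Module R A] [IsScalarTower R (MonoidAlgebra R G) A]
    (B : Type*) [AddCommGroup B] [Module (MonoidAlgebra F G) B]
    [Module F B] [IsScalarTower F (MonoidAlgebra F G) B]
    [Module R B] [IsScalarTower R F B]
    (htf : ∀ (c : R) (a : A), c • a = 0 → c = 0 ∨ a = 0)
    (f : A →ₗ[R] B) (hinj : Function.Injective f)
    (hf : ∀ (g : G) (a : A),
      f ((MonoidAlgebra.of R G g) • a) = (MonoidAlgebra.of F G g) • f a)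
    (hloc : ∀ b : B, ∃ (a : A) (c : R), c ≠ 0 ∧ (algebraMap R F c) • b = f a)
    (r : ℕ)
    (hA : ∀ N : Submodule (MonoidAlgebra R G) A, N.FG →
      ∃ S : Finset A, S.card ≤ r ∧ Submodule.span (MonoidAlgebra R G) (S : Set A) = N) :
    ∀ N : Submodule (MonoidAlgebra F G) B, N.FG →
      ∃ S : Finset B, S.card ≤ r ∧ Submodule.span (MonoidAlgebra F G) (S : Set B) = N := by
  classical
  -- the canonical algebra map RG → FG
  set φ : MonoidAlgebra R G →ₐ[R] MonoidAlgebra F G :=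
    (MonoidAlgebra.lift R (MonoidAlgebra F G) G) (MonoidAlgebra.of F G) with hφ
  -- F-scalars can be moved inside FG-submodules
  have hFsmul : ∀ (N : Submodule (MonoidAlgebra F G) B) (d : F) (b : B),
      b ∈ N → d • b ∈ N := by
    intro N d b hb
    rw [← algebraMap_smul (MonoidAlgebra F G) d b]
    exact N.smul_mem _ hb
  -- f intertwines the module structures via φ
  have hkey : ∀ (y : MonoidAlgebra R G) (a : A), f (y • a) = φ y • f a := by
    intro y
    induction y using MonoidAlgebra.induction_on with
    | of g =>
        intro a
        rw [hf]
        congr 1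
        simp [hφ]
    | add y z hy hz =>
        intro a
        rw [add_smul, map_add, map_add, add_smul, hy, hz]
    | smul c y hy =>
        intro a
        rw [smul_assoc, f.map_smul, hy, map_smul φ,
          ← algebraMap_smul F c (φ y), smul_assoc, algebraMap_smul]
  -- f maps RG-spans into FG-spans
  have hspan : ∀ (T : Set A) (x : A), x ∈ Submodule.span (MonoidAlgebra R G) T →
      f x ∈ Submodule.span (MonoidAlgebra F G) (f '' T) := by
    intro T x hx
    induction hx using Submodule.span_induction with
    | mem x hx => exact Submodule.subset_span ⟨x, hx, rfl⟩
    | zero => simp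
    | add x y _ _ hx hy => rw [map_add]; exact add_mem hx hy
    | smul c x _ hx => rw [hkey]; exact Submodule.smul_mem _ _ hx
  intro N hN
  obtain ⟨T, hT⟩ := hN
  choose a c hc hac using hloc
  -- the RG-submodule of A generated by the cleared-denominator lifts
  set M : Submodule (MonoidAlgebra R G) A :=
    Submodule.span (MonoidAlgebra R G) ((T.image a : Finset A) : Set A) with hM
  obtain ⟨S, hScard, hSspan⟩ := hA M ⟨T.image a, rfl⟩
  refine ⟨S.image f, le_trans (Finset.card_image_le) hScard, ?_⟩
  have himg : ((S.image f : Finset B) : Set B) = f '' (S : Set A) := Finset.coe_image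
  -- membership of the lifted generators in N
  have hfaT : ∀ t ∈ T, f (a t) ∈ N := by
    intro t ht
    have htN : t ∈ N := by
      rw [← hT]; exact Submodule.subset_span ht
    rw [← hac t]
    exact hFsmul N _ _ htN
  apply le_antisymm
  · -- span (f '' S) ≤ N
    rw [himg, Submodule.span_le]
    rintro b ⟨s, hs, rfl⟩
    have hsM : s ∈ M := by rw [← hSspan]; exact Submodule.subset_span hs
    have : f s ∈ Submodule.span (MonoidAlgebra F G)
        (f '' ((T.image a : Finset A) : Set A)) := hspan _ _ hsM
    refine Submodule.span_le.mpr ?_ this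
    rintro b ⟨x, hx, rfl⟩
    rw [Finset.coe_image] at hx
    obtain ⟨t, ht, rfl⟩ := hx
    exact hfaT t ht
  · -- N ≤ span (f '' S)
    rw [← hT, Submodule.span_le]
    intro t ht
    have hd : algebraMap R F (c t) ≠ 0 := by
      exact (map_ne_zero_iff _ (IsFractionRing.injective R F)).mpr (hc t)
    have hat : a t ∈ M := by
      exact Submodule.subset_span (by simp [Finset.mem_coe, Finset.mem_image]; exact ⟨t, ht, rfl⟩)
    have hfat : f (a t) ∈ Submodule.span (MonoidAlgebra F G) (f '' (S : Set A)) := by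
      rw [← hSspan] at hat
      exact hspan _ _ hat
    have : t = (algebraMap R F (c t))⁻¹ • f (a t) := by
      rw [← hac t, smul_smul, inv_mul_cancel₀ hd, one_smul]
    rw [himg, this]
    exact hFsmul _ _ _ hfat
end

section
/- Let D be a Dedekind domain, G a finite group, P a maximal ideal of D with char(D/P) = 0, and A a DG-module which is a P-module (every element is annihilated by some power of P). If B is a DG-submodule of A that is a direct summand of A as a D-module, then B is a direct summand of A as a DG-module. -/
/-- Let `D` be a Dedekind domain, `G` a finite group, `P` a maximal ideal of `D`
with `char(D/P) = 0`, and `A` a `DG`-module which is a `P`-module. If a `DG`-submodule `B` of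
`A` is a direct summand of `A` as a `D`-module, then `B` is a direct summand of `A` as a
`DG`-module. -/
theorem stmt12 (D : Type*) [CommRing D] [IsDedekindDomain D]
    (G : Type*) [Group G] [Finite G]
    (P : Ideal D) [P.IsMaximal] [CharZero (D ⧸ P)]
    (A : Type*) [AddCommGroup A] [Module (MonoidAlgebra D G) A]
    [Module D A] [IsScalarTower D (MonoidAlgebra D G) A]
    (hP : ∀ a : A, ∃ n : ℕ, ∀ x ∈ P ^ n, x • a = 0)
    (B : Submodule (MonoidAlgebra D G) A)
    (C : Submodule D A) (hC : IsCompl (B.restrictScalars D) C) :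
    ∃ K : Submodule (MonoidAlgebra D G) A, IsCompl B K := by
  classical
  have : Fintype G := Fintype.ofFinite G
  set R := MonoidAlgebra D G with hR
  set n : ℕ := Fintype.card G with hn_def
  have hnpos : 0 < n := Fintype.card_pos
  -- n is not in P
  have hnP : (n : D) ∉ P := by
    intro h
    have h0 : ((n : ℕ) : D ⧸ P) = 0 := by
      have := (Ideal.Quotient.eq_zero_iff_mem (I := P)).2 h
      simpa using this
    exact Nat.cast_ne_zero.2 hnpos.ne' h0
  -- coprimality of (n) with powers of P
  have hcop : ∀ m : ℕ, ∃ c : D, ∃ y ∈ P ^ m, c * (n : D) + y = 1 := by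
    intro m
    have h1 : P ⊔ Ideal.span {(n : D)} = ⊤ := by
      refine (Ideal.isMaximal_def.mp ‹P.IsMaximal›).2 _ (lt_of_le_of_ne le_sup_left ?_)
      intro he
      apply hnP
      rw [he]
      exact Ideal.mem_sup_right (Ideal.subset_span rfl)
    have hcp : IsCoprime (P ^ m) (Ideal.span {(n : D)}) := by
      have : IsCoprime P (Ideal.span {(n : D)}) :=
        (Ideal.isCoprime_iff_sup_eq).2 h1
      exact this.pow_left
    have htop : P ^ m ⊔ Ideal.span {(n : D)} = ⊤ :=
      (Ideal.isCoprime_iff_sup_eq).1 hcp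
    have h1mem : (1 : D) ∈ P ^ m ⊔ Ideal.span {(n : D)} := htop ▸ Submodule.mem_top
    rcases Submodule.mem_sup.1 h1mem with ⟨y, hy, z, hz, hyz⟩
    rcases Ideal.mem_span_singleton'.1 hz with ⟨c, hc⟩
    exact ⟨c, y, hy, by rw [← hc, add_comm] at hyz; exact hyz⟩
  -- multiplication by n on A is bijective
  have hinj : ∀ a : A, (n : D) • a = 0 → a = 0 := by
    intro a ha
    rcases hP a with ⟨m, hm⟩
    rcases hcop m with ⟨c, y, hy, hcy⟩
    calc a = (1 : D) • a := (one_smul D a).symm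
      _ = (c * (n : D) + y) • a := by rw [hcy]
      _ = c • ((n : D) • a) + y • a := by rw [add_smul, mul_smul]
      _ = 0 := by rw [ha, smul_zero, hm y hy, add_zero]
  have hsurj : ∀ a : A, ∃ b : A, (n : D) • b = a := by
    intro a
    rcases hP a with ⟨m, hm⟩
    rcases hcop m with ⟨c, y, hy, hcy⟩
    refine ⟨c • a, ?_⟩
    calc (n : D) • c • a = (c * (n : D)) • a := by rw [mul_comm, mul_smul]
      _ = (c * (n : D)) • a + y • a := by rw [hm y hy, add_zero]
      _ = (1 : D) • a := by rw [← add_smul, hcy]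
      _ = a := one_smul D a
  -- the D-linear projection onto B
  set p : Submodule D A := B.restrictScalars D with hp
  set π : A →ₗ[D] A := p.subtype ∘ₗ p.projectionOnto C hC with hπ
  have hπmem : ∀ a : A, π a ∈ B := fun a => (p.projectionOnto C hC a).2
  have hπid : ∀ b ∈ B, π b = b := by
    intro b hb
    simp only [hπ, LinearMap.comp_apply, Submodule.subtype_apply]
    rw [Submodule.projectionOnto_apply_left hC ⟨b, hb⟩]
  -- commuting of D-scalars with R-scalars
  have hcomm : ∀ (c : D) (x : R) (a : A), c • (x • a) = x • (c • a) := by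
    intro c x a
    rw [← smul_assoc, Algebra.smul_def, Algebra.commutes, mul_smul, algebraMap_smul]
  -- action of a group element as a D-linear map
  set τ : G → A →ₗ[D] A := fun g =>
    { toFun := fun a => (MonoidAlgebra.of D G g : R) • a
      map_add' := fun a b => smul_add _ a b
      map_smul' := fun c a => (hcomm c _ a).symm } with hτ
  -- the averaged projection
  set σ : A →ₗ[D] A := ∑ g : G, (τ g⁻¹) ∘ₗ π ∘ₗ (τ g) with hσ
  have hσ_apply : ∀ a : A, σ a =
      ∑ g : G, (MonoidAlgebra.of D G g⁻¹ : R) • π ((MonoidAlgebra.of D G g : R) • a) := by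
    intro a
    simp [hσ, hτ, LinearMap.sum_apply]
  have hσB : ∀ a : A, σ a ∈ B := by
    intro a
    rw [hσ_apply]
    exact Submodule.sum_mem B fun g _ => Submodule.smul_mem B _ (hπmem _)
  have hσid : ∀ b ∈ B, σ b = (n : D) • b := by
    intro b hb
    rw [hσ_apply]
    have : ∀ g : G, (MonoidAlgebra.of D G g⁻¹ : R) • π ((MonoidAlgebra.of D G g : R) • b)
        = b := by
      intro g
      rw [hπid _ (Submodule.smul_mem B _ hb), ← mul_smul, ← map_mul, inv_mul_cancel,
        map_one, one_smul]
    rw [Finset.sum_congr rfl fun g _ => this g]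
    simp [hn_def, Nat.cast_smul_eq_nsmul]
  -- equivariance
  have hσg : ∀ (h : G) (a : A),
      σ ((MonoidAlgebra.of D G h : R) • a) = (MonoidAlgebra.of D G h : R) • σ a := by
    intro h a
    rw [hσ_apply, hσ_apply, Finset.smul_sum]
    refine Fintype.sum_equiv (Equiv.mulRight h) _ _ ?_
    intro x
    simp only [Equiv.coe_mulRight, ← mul_smul, ← map_mul]
    congr 2
    group
  -- σ is R-linear
  have hσR : ∀ (x : R) (a : A), σ (x • a) = x • σ a := by
    intro x a
    induction x using MonoidAlgebra.induction with
    | zero => simp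
    | single_add g c f _ _ ih =>
        have h2 : (MonoidAlgebra.single g c : MonoidAlgebra D G) = c • (MonoidAlgebra.of D G g : R) := by
          rw [MonoidAlgebra.of_apply, MonoidAlgebra.smul_single', mul_one]
        rw [add_smul, map_add, ih, h2, smul_assoc, map_smul, hσg, add_smul, smul_assoc]
  set σ' : A →ₗ[R] A :=
    { toFun := σ
      map_add' := σ.map_add
      map_smul' := hσR } with hσ'
  refine ⟨LinearMap.ker σ', ?_, ?_⟩
  · -- disjoint
    rw [Submodule.disjoint_def]
    intro b hbB hbK
    have h0 : σ b = 0 := hbK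
    have := hσid b hbB
    rw [h0] at this
    exact hinj b this.symm
  · -- codisjoint
    rw [codisjoint_iff_le_sup]
    intro a _
    rcases hsurj (σ a) with ⟨b, hb⟩
    have hπb : π b = b := by
      have h1 : (n : D) • π b = (n : D) • b := by
        rw [← map_smul, hb, hπid _ (hσB a)]
      have h2 : (n : D) • (π b - b) = 0 := by
        rw [smul_sub, h1, sub_self]
      exact sub_eq_zero.1 (hinj _ h2)
    have hbB : b ∈ B := hπb ▸ hπmem b
    have hkK : a - b ∈ LinearMap.ker σ' := by
      show σ (a - b) = 0
      rw [map_sub, hσid b hbB, hb, sub_self]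
    have : a = b + (a - b) := by abel
    rw [this]
    exact Submodule.add_mem_sup hbB hkK
end

section
/- Let D be a Dedekind domain, G a finite group, P a maximal ideal of D with char(D/P) = 0, and A a DG-module which is a P-module. If A has finite special rank as a DG-module, then A is Artinian as a D-module. -/
namespace Stmt13Aux

open Submodule

variable {D : Type*} [CommRing D] {A : Type*} [AddCommGroup A] [Module D A]

/-- A strict chain of submodules of length `l` inside the interval `[C, W]`. -/
def SubChain (C W : Submodule D A) (l : ℕ) (f : ℕ → Submodule D A) : Prop :=
  (∀ i, i < l → f i < f (i + 1)) ∧ ∀ i, i ≤ l → C ≤ f i ∧ f i ≤ W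

theorem SubChain.of_le {C W : Submodule D A} {l l' : ℕ} {f} (h : SubChain C W l f)
    (hl : l' ≤ l) : SubChain C W l' f :=
  ⟨fun i hi => h.1 i (lt_of_lt_of_le hi hl), fun i hi => h.2 i (le_trans hi hl)⟩

theorem SubChain.weaken {C W C' W' : Submodule D A} {l : ℕ} {f} (h : SubChain C W l f)
    (hC : C' ≤ C) (hW : W ≤ W') : SubChain C' W' l f :=
  ⟨h.1, fun i hi => ⟨hC.trans (h.2 i hi).1, (h.2 i hi).2.trans hW⟩⟩

theorem SubChain.mapChain {C W C' W' : Submodule D A} {l : ℕ} {f} (h : SubChain C W l f)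
    (Φ : Submodule D A → Submodule D A)
    (hstrict : ∀ N N', C ≤ N → N < N' → N' ≤ W → Φ N < Φ N')
    (hbound : ∀ N, C ≤ N → N ≤ W → C' ≤ Φ N ∧ Φ N ≤ W') :
    SubChain C' W' l (fun i => Φ (f i)) := by
  constructor
  · intro i hi
    exact hstrict _ _ (h.2 i hi.le).1 (h.1 i hi) (h.2 (i+1) hi).2
  · intro i hi
    exact hbound _ (h.2 i hi).1 (h.2 i hi).2

theorem SubChain.append {C W : Submodule D A} {l : ℕ} {f} (h : SubChain C W l f) {x}
    (hx : f l < x) (hCx : C ≤ x) (hxW : x ≤ W) :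
    SubChain C W (l + 1) (fun i => if i ≤ l then f i else x) ∧
      (fun i => if i ≤ l then f i else x) (l + 1) = x := by
  refine ⟨⟨?_, ?_⟩, by simp⟩
  · intro i hi
    rcases lt_or_eq_of_le (Nat.lt_succ_iff.mp hi) with h' | rfl
    · simp only [if_pos h'.le, if_pos (Nat.succ_le_of_lt h')]
      exact h.1 i h'
    · simp only [if_pos le_rfl, if_neg (by omega : ¬ i + 1 ≤ i)]
      exact hx
  · intro i hi
    by_cases h' : i ≤ l
    · simpa [if_pos h'] using h.2 i h'
    · simpa [if_neg h'] using ⟨hCx, hxW⟩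

/-- Splitting a chain in `[C, W]` at an intermediate submodule `K`, using modularity. -/
theorem subchain_split {C W K : Submodule D A} (hCK : C ≤ K) (hKW : K ≤ W) :
    ∀ (l : ℕ) (f : ℕ → Submodule D A), SubChain C W l f →
      ∃ l₁ l₂ g h, l ≤ l₁ + l₂ ∧ SubChain C K l₁ g ∧ SubChain K W l₂ h ∧
        g l₁ = f l ⊓ K ∧ h l₂ = f l ⊔ K := by
  intro l
  induction l with
  | zero =>
    intro f hf
    refine ⟨0, 0, fun _ => f 0 ⊓ K, fun _ => f 0 ⊔ K, le_rfl, ?_, ?_, rfl, rfl⟩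
    · exact ⟨fun i hi => absurd hi (Nat.not_lt_zero i),
        fun i _ => ⟨le_inf (hf.2 0 le_rfl).1 hCK, inf_le_right⟩⟩
    · exact ⟨fun i hi => absurd hi (Nat.not_lt_zero i),
        fun i _ => ⟨le_sup_right, sup_le (hf.2 0 le_rfl).2 hKW⟩⟩
  | succ l ih =>
    intro f hf
    obtain ⟨l₁, l₂, g, h, hle, hg, hh, hgtop, hhtop⟩ := ih f (hf.of_le (Nat.le_succ l))
    have hstep : f l < f (l + 1) := hf.1 l (Nat.lt_succ_self l)
    have hfl1 : C ≤ f (l+1) ∧ f (l+1) ≤ W := hf.2 (l+1) le_rfl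
    by_cases hinf : f l ⊓ K < f (l + 1) ⊓ K
    · -- extend g
      have hgx : g l₁ < f (l+1) ⊓ K := by rw [hgtop]; exact hinf
      obtain ⟨hg', hg'top⟩ := hg.append hgx (le_inf hfl1.1 hCK) inf_le_right
      by_cases hsup : f l ⊔ K < f (l + 1) ⊔ K
      · have hhx : h l₂ < f (l+1) ⊔ K := by rw [hhtop]; exact hsup
        obtain ⟨hh', hh'top⟩ := hh.append hhx le_sup_right (sup_le hfl1.2 hKW)
        exact ⟨l₁ + 1, l₂ + 1, _, _, by omega, hg', hh', hg'top, hh'top⟩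
      · have hsupeq : f l ⊔ K = f (l+1) ⊔ K :=
          ((sup_le_sup_right hstep.le K).lt_or_eq).resolve_left hsup
        exact ⟨l₁ + 1, l₂, _, h, by omega, hg', hh, hg'top, by rw [hhtop, hsupeq]⟩
    · -- inf equal, sup strictly increases
      have hinfeq : f l ⊓ K = f (l+1) ⊓ K :=
        ((inf_le_inf_right K hstep.le).lt_or_eq).resolve_left hinf
      have hsup : f l ⊔ K < f (l + 1) ⊔ K :=
        sup_lt_sup_of_lt_of_inf_le_inf hstep (le_of_eq hinfeq.symm)
      have hhx : h l₂ < f (l+1) ⊔ K := by rw [hhtop]; exact hsup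
      obtain ⟨hh', hh'top⟩ := hh.append hhx le_sup_right (sup_le hfl1.2 hKW)
      exact ⟨l₁, l₂ + 1, g, _, by omega, hg, hh', by rw [hgtop, hinfeq], hh'top⟩

/-- Concatenation of a chain in `[⊥, V]` with a chain in `[U, T]`, where `V ≤ U ≤ T`. -/
theorem subchain_concat {V U T : Submodule D A} (hVU : V ≤ U) (hUT : U ≤ T)
    {l₂ : ℕ} {a} (ha : SubChain ⊥ V l₂ a) {l₁ : ℕ} {b} (hb : SubChain U T l₁ b) :
    ∃ c, SubChain ⊥ T (l₂ + l₁) c := by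
  refine ⟨fun j => if j ≤ l₂ then a j else b (j - l₂), ⟨?_, ?_⟩⟩
  · intro i hi
    by_cases h1 : i + 1 ≤ l₂
    · simp only [if_pos (by omega : i ≤ l₂), if_pos h1]
      exact ha.1 i (by omega)
    · by_cases h2 : i ≤ l₂
      · -- i = l₂, junction step: a l₂ < b 1  (here l₁ ≥ 1)
        have hil : i = l₂ := by omega
        have hl₁ : 1 ≤ l₁ := by omega
        simp only [if_pos h2, if_neg h1]
        subst hil
        have h01 : b 0 < b 1 := hb.1 0 (by omega)
        have : a i ≤ b 0 := ((ha.2 i le_rfl).2.trans hVU).trans (hb.2 0 (by omega)).1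
        have h4 : a i < b 1 := lt_of_le_of_lt this h01
        have h3 : i + 1 - i = 1 := by omega
        rw [h3]
        exact h4
      · simp only []
        rw [if_neg h2, if_neg h1]
        have : i - l₂ < l₁ := by omega
        have := hb.1 (i - l₂) this
        have heq : i + 1 - l₂ = (i - l₂) + 1 := by omega
        rw [heq]
        exact this
  · intro i hi
    by_cases h2 : i ≤ l₂
    · simp only [if_pos h2]
      exact ⟨bot_le, ((ha.2 i h2).2.trans hVU).trans hUT⟩
    · simp only [if_neg h2]
      exact ⟨bot_le, (hb.2 (i - l₂) (by omega)).2⟩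

end Stmt13Aux
namespace Stmt13Aux

open Submodule

theorem exists_pi {D : Type*} [CommRing D] [IsDedekindDomain D] (P : Ideal D) [P.IsMaximal] :
    ∃ π ∈ P, ∀ n : ℕ, P ≤ Ideal.span {π} ⊔ P ^ n := by
  by_cases hbot : P = ⊥
  · exact ⟨0, by simp [hbot], fun n => by rw [hbot]; exact bot_le⟩
  · have hPtop : P ≠ ⊤ := Ideal.IsMaximal.ne_top inferInstance
    have h2 : P ^ 2 < P := Ideal.pow_lt_self P hbot hPtop 2 le_rfl
    obtain ⟨π, hπP, hπ2⟩ := SetLike.exists_of_lt h2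
    refine ⟨π, hπP, fun n => ?_⟩
    rcases n with _ | _ | m
    · rw [pow_zero, Ideal.one_eq_top]
      exact le_trans le_top le_sup_right
    · rw [pow_one]
      exact le_sup_right
    · set n := m + 2 with hn
      have hn0 : n ≠ 0 := by omega
      set J := Ideal.span {π} ⊔ P ^ n with hJ
      have hJP : J ≤ P := sup_le ((Ideal.span_singleton_le_iff_mem P).mpr hπP)
        (Ideal.pow_le_self hn0)
      have hdvd : J ∣ P ^ n := Ideal.dvd_iff_le.mpr le_sup_right
      have hprime : Prime P := Ideal.prime_of_isPrime hbot inferInstance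
      obtain ⟨i, hin, hassoc⟩ := (dvd_prime_pow hprime n).mp hdvd
      have hJeq : J = P ^ i := associated_iff_eq.mp hassoc
      rcases i with _ | _ | j
      · rw [pow_zero, Ideal.one_eq_top] at hJeq
        exact absurd (top_le_iff.mp (hJeq ▸ hJP)) hPtop
      · rw [pow_one] at hJeq
        exact hJeq ▸ le_rfl
      · exfalso
        have hmem : π ∈ J := (le_sup_left : Ideal.span {π} ≤ J) (Ideal.mem_span_singleton_self π)
        rw [hJeq] at hmem
        exact hπ2 (Ideal.pow_le_pow_right (by omega) hmem)

variable {D : Type*} [CommRing D] {A : Type*} [AddCommGroup A] [Module D A]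

theorem claim (P : Ideal D) (π : D) (hπ : π ∈ P) :
    ∀ (n : ℕ) (M C : Submodule D A), C ≤ M → (∀ x ∈ M, ∀ q ∈ P ^ n, q • x = 0) →
    ∀ (l : ℕ) (f : ℕ → Submodule D A),
      SubChain C (M ⊓ C.comap (LinearMap.lsmul D A π)) l f →
    ∃ g, SubChain ⊥ (M ⊓ LinearMap.ker (LinearMap.lsmul D A π)) l g := by
  intro n
  induction n with
  | zero =>
    intro M C hCM hkill l f hf
    have hM : M ≤ ⊥ := by
      intro x hx
      have := hkill x hx 1 (by rw [pow_zero, Ideal.one_eq_top]; trivial)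
      simpa using this
    rcases l with _ | l
    · exact ⟨fun _ => ⊥, fun i hi => absurd hi (by omega), fun i _ => ⟨le_rfl, bot_le⟩⟩
    · exfalso
      have h0 : f 0 < f 1 := hf.1 0 (by omega)
      have h1 : f 1 ≤ ⊥ := (hf.2 1 (by omega)).2.trans (inf_le_left.trans hM)
      exact absurd (lt_of_lt_of_le h0 h1) (by simp)
  | succ n ih =>
    intro M C hCM hkill l f hf
    set πm := LinearMap.lsmul D A π with hπm
    set T := M ⊓ LinearMap.ker πm with hT
    set W := M ⊓ C.comap πm with hWdef
    have hWM : W ≤ M := inf_le_left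
    have hCW : C ≤ W := le_inf hCM (fun x hx => by
      simp only [Submodule.mem_comap, hπm, LinearMap.lsmul_apply]
      exact C.smul_mem π hx)
    have hTW : T ≤ W := by
      intro x hx
      obtain ⟨hx1, hx2⟩ := Submodule.mem_inf.mp hx
      refine Submodule.mem_inf.mpr ⟨hx1, Submodule.mem_comap.mpr ?_⟩
      rw [LinearMap.mem_ker.mp hx2]
      exact C.zero_mem
    set K := C ⊔ T with hK
    have hKW : K ≤ W := sup_le hCW hTW
    obtain ⟨l₁, l₂, g, h, hle, hg, hh, -, -⟩ := subchain_split le_sup_left hKW l f hf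
    -- transform the lower chain `g` into a chain in `[C ⊓ T, T]`
    have hg' : SubChain (C ⊓ T) T l₁ (fun i => g i ⊓ T) := by
      refine hg.mapChain (fun N => N ⊓ T) ?_ ?_
      · intro N N' hCN hNN' hN'K
        refine lt_of_le_of_ne (inf_le_inf_right T hNN'.le) ?_
        intro heq
        have hsup : N' ⊔ T ≤ N ⊔ T := by
          calc N' ⊔ T ≤ K ⊔ T := sup_le_sup_right hN'K T
          _ = C ⊔ T := by rw [hK, sup_assoc, sup_idem]
          _ ≤ N ⊔ T := sup_le_sup_right hCN T
        exact hNN'.ne (eq_of_le_of_inf_le_of_sup_le hNN'.le heq.symm.le hsup)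
      · intro N hCN hNK
        exact ⟨inf_le_inf_right T hCN, inf_le_right⟩
    -- transform the upper chain `h` into a chain by applying `π •`
    set M' := Submodule.map πm W with hM'
    set C' := Submodule.map πm C with hC'
    have hh' : SubChain C' (M' ⊓ C'.comap πm) l₂ (fun i => Submodule.map πm (h i)) := by
      refine hh.mapChain (fun N => Submodule.map πm N) ?_ ?_
      · intro N N' hKN hNN' hN'W
        refine lt_of_le_of_ne (Submodule.map_mono hNN'.le) ?_
        intro heq
        obtain ⟨x, hxN', hxN⟩ := SetLike.exists_of_lt hNN'
        have heq' : Submodule.map πm N = Submodule.map πm N' := heq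
        have hmx : πm x ∈ Submodule.map πm N := by
          rw [heq']; exact Submodule.mem_map_of_mem hxN'
        obtain ⟨y, hyN, hyx⟩ := hmx
        have hxy : x - y ∈ T := by
          refine Submodule.mem_inf.mpr ⟨?_, ?_⟩
          · exact Submodule.sub_mem M ((hN'W.trans hWM) hxN')
              (((hNN'.le.trans hN'W).trans hWM) hyN)
          · exact LinearMap.mem_ker.mpr (by rw [map_sub, hyx, sub_self])
        have : x ∈ N := by
          have hyN' : y ∈ N := hyN
          have : x - y ∈ N := hKN ((le_sup_right : T ≤ K) hxy)
          simpa using N.add_mem this hyN'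
        exact hxN this
      · intro N hKN hNW
        constructor
        · exact Submodule.map_mono (le_sup_left.trans hKN)
        · refine le_inf (Submodule.map_mono hNW) ?_
          rintro z ⟨y, hyN, rfl⟩
          simp only [Submodule.mem_comap]
          have hyW : y ∈ W := hNW hyN
          have hyC : πm y ∈ C := hyW.2
          have : πm (πm y) ∈ C' := Submodule.mem_map_of_mem hyC
          simpa using this
    -- apply the induction hypothesis to `M' = π • W`
    have hkill' : ∀ x ∈ M', ∀ q ∈ P ^ n, q • x = 0 := by
      rintro x ⟨w, hwW, rfl⟩ q hq
      have : q • πm w = (q * π) • w := by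
        simp only [hπm, LinearMap.lsmul_apply, smul_smul]
      rw [this]
      exact hkill w (hWM hwW) _ (by
        rw [pow_succ]
        exact Ideal.mul_mem_mul hq hπ)
    obtain ⟨g₂, hg₂⟩ := ih M' C' (Submodule.map_mono hCW) hkill' l₂ _ hh'
    -- `V := M' ⊓ ker π ≤ C ⊓ T`
    have hV : M' ⊓ LinearMap.ker πm ≤ C ⊓ T := by
      intro x hx
      obtain ⟨hxM', hxker⟩ := Submodule.mem_inf.mp hx
      obtain ⟨w, hwW, rfl⟩ := hxM'
      refine Submodule.mem_inf.mpr ⟨?_, Submodule.mem_inf.mpr ⟨?_, hxker⟩⟩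
      · exact (Submodule.mem_inf.mp hwW).2
      · exact M.smul_mem π (hWM hwW)
    obtain ⟨c, hc⟩ := subchain_concat hV inf_le_right hg₂ hg'
    exact ⟨c, hc.of_le (by omega)⟩

end Stmt13Aux
namespace Stmt13Aux

open Submodule

section Group

variable {D : Type*} [CommRing D] {A : Type*} [AddCommGroup A] [Module D A]
variable {G : Type*} [Group G] [Module (MonoidAlgebra D G) A]
  [IsScalarTower D (MonoidAlgebra D G) A]

theorem smul_comm_DG (c : MonoidAlgebra D G) (d : D) (a : A) :
    c • (d • a) = d • (c • a) := by
  rw [← algebraMap_smul (MonoidAlgebra D G) d a, ← mul_smul, ← Algebra.commutes d c, mul_smul,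
    algebraMap_smul]

/-- The `D`-module underlying the `DG`-span of a set `X` is spanned over `D` by the orbit
`{g • x | g ∈ G, x ∈ X}`. -/
theorem span_DG_eq (X : Set A) :
    (Submodule.span (MonoidAlgebra D G) X).restrictScalars D =
      Submodule.span D
        ((fun p : G × A => (MonoidAlgebra.of D G p.1) • p.2) '' (Set.univ ×ˢ X)) := by
  set gens := (fun p : G × A => (MonoidAlgebra.of D G p.1) • p.2) '' (Set.univ ×ˢ X) with hgens
  apply le_antisymm
  · have key : ∀ (c : MonoidAlgebra D G) (a : A), a ∈ Submodule.span D gens →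
        c • a ∈ Submodule.span D gens := by
      intro c a ha
      induction ha using Submodule.span_induction with
      | mem x hx =>
        obtain ⟨⟨g, x⟩, ⟨-, hxX⟩, rfl⟩ := hx
        induction c using MonoidAlgebra.induction_on with
        | of g' =>
          rw [← mul_smul, ← map_mul]
          exact Submodule.subset_span ⟨(g' * g, x), ⟨Set.mem_univ _, hxX⟩, rfl⟩
        | add c₁ c₂ h₁ h₂ =>
          rw [add_smul]
          exact Submodule.add_mem _ h₁ h₂
        | smul d c hc =>
          rw [smul_assoc]
          exact Submodule.smul_mem _ d hc
      | zero =>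
        rw [smul_zero]; exact Submodule.zero_mem _
      | add x y hx hy ihx ihy =>
        rw [smul_add]; exact Submodule.add_mem _ ihx ihy
      | smul d x hx ihx =>
        rw [smul_comm_DG]; exact Submodule.smul_mem _ d ihx
    intro a ha
    have ha' : a ∈ Submodule.span (MonoidAlgebra D G) X := ha
    let W' : Submodule (MonoidAlgebra D G) A :=
      { carrier := (Submodule.span D gens : Set A)
        add_mem' := fun h1 h2 => Submodule.add_mem _ h1 h2
        zero_mem' := Submodule.zero_mem _
        smul_mem' := fun c a ha => key c a ha }
    have hle : Submodule.span (MonoidAlgebra D G) X ≤ W' := by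
      rw [Submodule.span_le]
      intro x hx
      show x ∈ Submodule.span D gens
      refine Submodule.subset_span ⟨(1, x), ⟨Set.mem_univ _, hx⟩, ?_⟩
      show (MonoidAlgebra.of D G 1) • x = x
      rw [map_one, one_smul]
    exact hle ha'
  · rw [Submodule.span_le]
    rintro z ⟨⟨g, x⟩, ⟨-, hxX⟩, rfl⟩
    show (MonoidAlgebra.of D G g) • x ∈ Submodule.span (MonoidAlgebra D G) X
    exact Submodule.smul_mem _ _ (Submodule.subset_span hxX)

theorem socle_smul (P : Ideal D) (c : MonoidAlgebra D G) (a : A)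
    (ha : ∀ p ∈ P, p • a = 0) : ∀ p ∈ P, p • (c • a) = 0 := by
  intro p hp
  rw [← smul_comm_DG, ha p hp, smul_zero]

end Group

end Stmt13Aux
namespace Stmt13Aux

open Submodule

/-- Chains of `D`-submodules inside the socle are bounded by `r * |G|`. -/
theorem socle_chain_bound
    {D : Type*} [CommRing D] {A : Type*} [AddCommGroup A] [Module D A]
    (P : Ideal D) [P.IsMaximal]
    {G : Type*} [Group G] [Finite G] [Module (MonoidAlgebra D G) A]
    [IsScalarTower D (MonoidAlgebra D G) A]
    (r : ℕ)
    (hsr : ∀ N : Submodule (MonoidAlgebra D G) A, N.FG →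
      ∃ S : Finset A, S.card ≤ r ∧ Submodule.span (MonoidAlgebra D G) (S : Set A) = N)
    (Ssoc : Submodule D A) (hS : ∀ x ∈ Ssoc, ∀ p ∈ P, p • x = 0)
    (hS' : ∀ x : A, (∀ p ∈ P, p • x = 0) → x ∈ Ssoc)
    (l : ℕ) (F : ℕ → Submodule D A) (hF : SubChain ⊥ Ssoc l F) : l ≤ r * Nat.card G := by
  classical
  letI : Field (D ⧸ P) := Ideal.Quotient.field P
  haveI : Fintype G := Fintype.ofFinite G
  -- pick witnesses for each step of the chain
  have hy : ∀ j, j < l → ∃ y, y ∈ F (j + 1) ∧ y ∉ F j := fun j hj =>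
    SetLike.exists_of_lt (hF.1 j hj)
  let Y : ℕ → A := fun j => if h : j < l then (hy j h).choose else 0
  have hY1 : ∀ j, j < l → Y j ∈ F (j + 1) := by
    intro j hj; simp only [Y, dif_pos hj]; exact (hy j hj).choose_spec.1
  have hY2 : ∀ j, j < l → Y j ∉ F j := by
    intro j hj; simp only [Y, dif_pos hj]; exact (hy j hj).choose_spec.2
  have hYS : ∀ j, j < l → Y j ∈ Ssoc := fun j hj => (hF.2 (j + 1) hj).2 (hY1 j hj)
  set ys : Finset A := (Finset.range l).image Y with hys
  set N : Submodule (MonoidAlgebra D G) A := Submodule.span (MonoidAlgebra D G) (ys : Set A)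
    with hN
  obtain ⟨T, hTcard, hTspan⟩ := hsr N (Submodule.fg_span (ys.finite_toSet))
  have hTN : (T : Set A) ⊆ N := hTspan ▸ Submodule.subset_span
  have hYN : ∀ j, j < l → Y j ∈ N :=
    fun j hj => Submodule.subset_span (by
      rw [Finset.coe_image]
      exact Set.mem_image_of_mem Y (by simpa using hj))
  -- `N` is contained in the socle
  have hNS : ∀ a : A, a ∈ N → a ∈ Ssoc := by
    intro a ha
    let S' : Submodule (MonoidAlgebra D G) A :=
      { carrier := (Ssoc : Set A)
        add_mem' := fun h1 h2 => Ssoc.add_mem h1 h2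
        zero_mem' := Ssoc.zero_mem
        smul_mem' := fun c a ha => hS' _ (socle_smul P c a (hS a ha)) }
    have hle : N ≤ S' := by
      rw [hN, Submodule.span_le]
      intro x hx
      rw [Finset.coe_image] at hx
      obtain ⟨j, hj, rfl⟩ := hx
      exact hYS j (by simpa using hj)
    exact hle ha
  -- the `D`-span description of `N`
  set gens : Set A := (fun p : G × A => (MonoidAlgebra.of D G p.1) • p.2) '' (Set.univ ×ˢ (T : Set A)) with hgens
  have hspan : N.restrictScalars D = Submodule.span D gens := by
    have h0 := span_DG_eq (D := D) (G := G) (A := A) ((T : Set A))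
    rw [hTspan] at h0
    exact h0
  -- pass to the socle with its `D ⧸ P`-module structure
  have hTor : Module.IsTorsionBySet D ↥Ssoc (P : Set D) := by
    intro x p
    exact Subtype.ext (hS x.1 x.2 p.1 p.2)
  letI : Module (D ⧸ P) ↥Ssoc := hTor.module
  let toK : Submodule D ↥Ssoc → Submodule (D ⧸ P) ↥Ssoc := fun Q =>
    { carrier := (Q : Set ↥Ssoc)
      add_mem' := fun h1 h2 => Q.add_mem h1 h2
      zero_mem' := Q.zero_mem
      smul_mem' := by
        intro c x hx
        obtain ⟨d, rfl⟩ := Ideal.Quotient.mk_surjective c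
        show (Ideal.Quotient.mk P d) • x ∈ (Q : Set ↥Ssoc)
        have hd : (Ideal.Quotient.mk P d) • x = d • x := hTor.mk_smul d x
        rw [hd]
        exact Q.smul_mem d hx }
  -- the generators, lifted to the socle
  let φ : G × {x // x ∈ T} → ↥Ssoc := fun p =>
    ⟨(MonoidAlgebra.of D G p.1) • p.2.1, hNS _ (Submodule.smul_mem _ _ (hTN p.2.2))⟩
  set gensFin : Finset ↥Ssoc := (Finset.univ ×ˢ T.attach).image φ with hgensFin
  have hcard : gensFin.card ≤ Nat.card G * r := by
    calc gensFin.card ≤ (Finset.univ ×ˢ T.attach).card := Finset.card_image_le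
    _ = Fintype.card G * T.card := by
        rw [Finset.card_product, Finset.card_univ, Finset.card_attach]
    _ ≤ Nat.card G * r := by
        rw [Nat.card_eq_fintype_card]
        exact Nat.mul_le_mul_left _ hTcard
  have himg : (Subtype.val '' (gensFin : Set ↥Ssoc)) = gens := by
    ext z
    constructor
    · rintro ⟨x, hx, rfl⟩
      rw [Finset.mem_coe, hgensFin, Finset.mem_image] at hx
      obtain ⟨⟨g, t⟩, -, rfl⟩ := hx
      exact ⟨(g, t.1), ⟨Set.mem_univ _, t.2⟩, rfl⟩
    · rintro ⟨⟨g, t⟩, ⟨-, htT⟩, rfl⟩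
      refine ⟨φ (g, ⟨t, htT⟩), ?_, rfl⟩
      rw [Finset.mem_coe, hgensFin, Finset.mem_image]
      exact ⟨(g, ⟨t, htT⟩), Finset.mem_product.mpr ⟨Finset.mem_univ _, T.mem_attach _⟩, rfl⟩
  have hmap : Submodule.map Ssoc.subtype (Submodule.span D (gensFin : Set ↥Ssoc)) =
      Submodule.span D gens := by
    rw [Submodule.map_span, ← himg]
    rfl
  -- the chain, pulled back to the socle
  let ND : Submodule D A := N.restrictScalars D
  let Fd : ℕ → Submodule D ↥Ssoc := fun j => Submodule.comap Ssoc.subtype (F j ⊓ ND)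
  have hFd_le : ∀ j, Fd j ≤ Submodule.span D (gensFin : Set ↥Ssoc) := by
    intro j x hx
    have hx2 : (x : A) ∈ Submodule.span D gens := by
      rw [← hspan]
      exact (Submodule.mem_inf.mp hx).2
    rw [← hmap] at hx2
    obtain ⟨x', hx', hval⟩ := hx2
    have : x' = x := Subtype.ext hval
    exact this ▸ hx'
  have hDK : ∀ (s : Set ↥Ssoc) (x : ↥Ssoc), x ∈ Submodule.span D s →
      x ∈ Submodule.span (D ⧸ P) s := by
    intro s x hx
    refine Submodule.span_induction (p := fun z _ => z ∈ Submodule.span (D ⧸ P) s)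
      (fun z hz => Submodule.subset_span hz) (Submodule.zero_mem _)
      (fun a b _ _ ha hb => Submodule.add_mem _ ha hb) ?_ hx
    intro d z _ hz
    have hd : d • z = (Ideal.Quotient.mk P d) • z := (hTor.mk_smul d z).symm
    rw [hd]
    exact Submodule.smul_mem _ _ hz
  set V₀ : Submodule (D ⧸ P) ↥Ssoc := Submodule.span (D ⧸ P) (gensFin : Set ↥Ssoc) with hV₀
  haveI : FiniteDimensional (D ⧸ P) V₀ := FiniteDimensional.span_of_finite _ gensFin.finite_toSet
  have hV₀rank : Module.finrank (D ⧸ P) V₀ ≤ Nat.card G * r :=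
    le_trans (finrank_span_finset_le_card (R := D ⧸ P) gensFin) hcard
  let Fk : ℕ → Submodule (D ⧸ P) ↥Ssoc := fun j => toK (Fd j)
  have hFkV₀ : ∀ j, Fk j ≤ V₀ := by
    intro j x hx
    exact hDK _ x (hFd_le j hx)
  have hFkmono : ∀ j, j < l → Fk j < Fk (j + 1) := by
    intro j hj
    have hle : Fk j ≤ Fk (j + 1) := by
      intro x hx
      have hx' : x ∈ Fd j := hx
      show x ∈ Fd (j + 1)
      obtain ⟨h1, h2⟩ := Submodule.mem_inf.mp hx'
      exact Submodule.mem_inf.mpr ⟨(hF.1 j hj).le h1, h2⟩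
    refine lt_of_le_of_ne hle ?_
    intro heq
    have hYmem : (⟨Y j, hYS j hj⟩ : ↥Ssoc) ∈ Fk (j + 1) :=
      Submodule.mem_inf.mpr ⟨hY1 j hj, by
        show Y j ∈ ND
        exact hYN j hj⟩
    rw [← heq] at hYmem
    have : Y j ∈ F j := (Submodule.mem_inf.mp hYmem).1
    exact hY2 j hj this
  -- count dimensions along the chain
  have hcount : ∀ j, j ≤ l → j ≤ Module.finrank (D ⧸ P) (Fk j) := by
    intro j
    induction j with
    | zero => intro _; exact Nat.zero_le _
    | succ j ih =>
      intro hj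
      haveI : FiniteDimensional (D ⧸ P) (Fk (j + 1)) :=
        Submodule.finiteDimensional_of_le (hFkV₀ (j + 1))
      have hlt := Submodule.finrank_lt_finrank_of_lt (hFkmono j (by omega))
      have := ih (by omega)
      omega
  have hml : l ≤ Module.finrank (D ⧸ P) (Fk l) := hcount l le_rfl
  haveI : FiniteDimensional (D ⧸ P) (Fk l) := Submodule.finiteDimensional_of_le (hFkV₀ l)
  have : Module.finrank (D ⧸ P) (Fk l) ≤ Module.finrank (D ⧸ P) V₀ := by
    have := Submodule.finrank_mono (R := D ⧸ P) (hFkV₀ l)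
    exact this
  rw [mul_comm]
  omega

end Stmt13Aux
namespace Stmt13Aux

theorem antitone_stabilizes
    {D : Type*} [CommRing D] {A : Type*} [AddCommGroup A] [Module D A]
    {Z : ℕ → Submodule D A} (hZ : ∀ i j, i ≤ j → Z j ≤ Z i)
    {C W : Submodule D A} (hb : ∀ i, C ≤ Z i ∧ Z i ≤ W) (B : ℕ)
    (hB : ∀ l f, SubChain C W l f → l ≤ B) :
    ∃ i, ∀ j, i ≤ j → Z j = Z i := by
  by_contra hcon
  push_neg at hcon
  have hstep : ∀ i, ∃ j, i ≤ j ∧ Z j < Z i := by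
    intro i
    obtain ⟨j, hij, hne⟩ := hcon i
    exact ⟨j, hij, lt_of_le_of_ne (hZ i j hij) hne⟩
  let idx : ℕ → ℕ := fun k => Nat.rec 0 (fun _ prev => (hstep prev).choose) k
  have hidx : ∀ k, Z (idx (k + 1)) < Z (idx k) := fun k => (hstep (idx k)).choose_spec.2
  have hchain : SubChain C W (B + 1) (fun k => Z (idx (B + 1 - k))) := by
    constructor
    · intro i hi
      have heq : B + 1 - i = (B + 1 - (i + 1)) + 1 := by omega
      show Z (idx (B + 1 - i)) < Z (idx (B + 1 - (i + 1)))
      rw [heq]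
      exact hidx _
    · intro i _
      exact hb _
  exact absurd (hB _ _ hchain) (by omega)

end Stmt13Aux

/-- Let `D` be a Dedekind domain, `G` a finite group, `P` a maximal ideal of `D`
with `char(D/P) = 0`, and `A` a `DG`-module which is a `P`-module. If `A` has finite special
rank as a `DG`-module, then `A` is Artinian as a `D`-module. -/
theorem stmt13 (D : Type*) [CommRing D] [IsDedekindDomain D]
    (G : Type*) [Group G] [Finite G]
    (P : Ideal D) [P.IsMaximal] [CharZero (D ⧸ P)]
    (A : Type*) [AddCommGroup A] [Module (MonoidAlgebra D G) A]
    [Module D A] [IsScalarTower D (MonoidAlgebra D G) A]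
    (hP : ∀ a : A, ∃ n : ℕ, ∀ x ∈ P ^ n, x • a = 0)
    (hsr : ∃ r : ℕ, ∀ N : Submodule (MonoidAlgebra D G) A, N.FG →
      ∃ S : Finset A, S.card ≤ r ∧ Submodule.span (MonoidAlgebra D G) (S : Set A) = N) :
    IsArtinian D A := by
  classical
  open Stmt13Aux in
  obtain ⟨r, hsr⟩ := hsr
  obtain ⟨π, hπP, hπspan⟩ := Stmt13Aux.exists_pi P
  set πm := LinearMap.lsmul D A π with hπm
  -- the socle of `A`
  set Ssoc : Submodule D A :=
    { carrier := {x | ∀ p ∈ P, p • x = 0}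
      add_mem' := fun ha hb => by
        intro p hp
        rw [smul_add, ha p hp, hb p hp, add_zero]
      zero_mem' := fun p _ => smul_zero p
      smul_mem' := fun d x hx => by
        intro p hp
        rw [smul_smul, mul_comm, ← smul_smul, hx p hp, smul_zero] } with hSsoc
  set d := r * Nat.card G with hd'
  have hd : ∀ l F, Stmt13Aux.SubChain ⊥ Ssoc l F → l ≤ d :=
    fun l F hF => Stmt13Aux.socle_chain_bound P r hsr Ssoc (fun x hx => hx) (fun x hx => hx) l F hF
  rw [← monotone_stabilizes_iff_artinian]
  intro f
  set Fo : ℕ → Submodule D A := fun i => OrderDual.ofDual (f i) with hFo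
  have hmono : ∀ i j, i ≤ j → Fo j ≤ Fo i := fun i j h => f.monotone h
  set C : Submodule D A := ⨅ i, Fo i with hC
  have hCle : ∀ i, C ≤ Fo i := fun i => iInf_le _ i
  suffices hsuf : ∃ i, Fo i = C by
    obtain ⟨i, hi⟩ := hsuf
    refine ⟨i, fun m hm => ?_⟩
    have h1 : Fo m ≤ Fo i := hmono i m hm
    have h2 : Fo i ≤ Fo m := hi ▸ hCle m
    exact (le_antisymm h2 h1 : Fo i = Fo m)
  by_contra hcon
  push_neg at hcon
  have hlt : ∀ i, C < Fo i := fun i => lt_of_le_of_ne (hCle i) (Ne.symm (hcon i))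
  -- the submodule of elements sent into `C` by `P`
  set Csat : Submodule D A :=
    { carrier := {x | ∀ p ∈ P, p • x ∈ C}
      add_mem' := fun ha hb => by
        intro p hp
        rw [smul_add]
        exact Submodule.add_mem _ (ha p hp) (hb p hp)
      zero_mem' := fun p _ => by rw [smul_zero]; exact Submodule.zero_mem _
      smul_mem' := fun e x hx => by
        intro p hp
        rw [smul_smul, mul_comm, ← smul_smul]
        exact Submodule.smul_mem _ e (hx p hp) } with hCsat
  -- in every `Fo i` there is a socle element mod `C` outside of `C`
  have hy : ∀ i, ∃ y, y ∈ Fo i ∧ y ∉ C ∧ y ∈ Csat := by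
    intro i
    obtain ⟨x, hxF, hxC⟩ := SetLike.exists_of_lt (hlt i)
    have hex : ∃ n : ℕ, ∀ q ∈ P ^ n, q • x ∈ C := by
      obtain ⟨n, hn⟩ := hP x
      exact ⟨n, fun q hq => by rw [hn q hq]; exact Submodule.zero_mem _⟩
    have hspec := Nat.find_spec hex
    have hn0 : Nat.find hex ≠ 0 := by
      intro h0
      apply hxC
      have h1 := hspec 1 (by rw [h0, pow_zero, Ideal.one_eq_top]; trivial)
      simpa using h1
    obtain ⟨m, hm⟩ : ∃ m, Nat.find hex = m + 1 := ⟨Nat.find hex - 1, by omega⟩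
    have hmin : ¬(∀ q ∈ P ^ m, q • x ∈ C) := Nat.find_min hex (by omega)
    push_neg at hmin
    obtain ⟨q, hq, hqx⟩ := hmin
    refine ⟨q • x, Submodule.smul_mem _ q hxF, hqx, ?_⟩
    intro p hp
    rw [smul_smul]
    refine hspec (p * q) ?_
    rw [hm, pow_succ, mul_comm p q]
    exact Ideal.mul_mem_mul hq hp
  choose y hy1 hy2 hy3 using hy
  -- chains in `[C, C ⊔ Csat]` are bounded by `d`
  have hsat : ∀ l g, Stmt13Aux.SubChain C (C ⊔ Csat) l g → l ≤ d := by
    intro l g hg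
    have hw : ∀ j, j < l → ∃ s, s ∈ Csat ∧ s ∈ g (j + 1) ∧ s ∉ g j := by
      intro j hj
      obtain ⟨w, hw1, hw2⟩ := SetLike.exists_of_lt (hg.1 j hj)
      have hwmem : w ∈ C ⊔ Csat := (hg.2 (j + 1) hj).2 hw1
      obtain ⟨c, hc, s, hs, rfl⟩ := Submodule.mem_sup.mp hwmem
      have hcg : c ∈ g (j + 1) := (hg.2 (j + 1) hj).1 hc
      refine ⟨s, hs, ?_, ?_⟩
      · have hseq : s = (c + s) - c := by abel
        rw [hseq]
        exact Submodule.sub_mem _ hw1 hcg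
      · intro hsg
        exact hw2 (Submodule.add_mem _ ((hg.2 j hj.le).1 hc) hsg)
    let Sel : ℕ → A := fun j => if h : j < l then (hw j h).choose else 0
    have hSel1 : ∀ j (h : j < l), Sel j ∈ Csat := by
      intro j h; simp only [Sel, dif_pos h]; exact (hw j h).choose_spec.1
    have hSel2 : ∀ j (h : j < l), Sel j ∈ g (j + 1) := by
      intro j h; simp only [Sel, dif_pos h]; exact (hw j h).choose_spec.2.1
    have hSel3 : ∀ j (h : j < l), Sel j ∉ g j := by
      intro j h; simp only [Sel, dif_pos h]; exact (hw j h).choose_spec.2.2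
    -- a level `n` that kills all the selections
    have hexp : ∀ j, ∃ n : ℕ, ∀ q ∈ P ^ n, q • Sel j = 0 := fun j => hP _
    set n : ℕ := (Finset.range l).sup fun j => (hexp j).choose with hn
    have hSelM : ∀ j, j < l → ∀ q ∈ P ^ n, q • Sel j = 0 := by
      intro j hj q hq
      refine (hexp j).choose_spec q ?_
      have hle : (hexp j).choose ≤ n := Finset.le_sup (f := fun j => (hexp j).choose) (Finset.mem_range.mpr hj)
      exact Ideal.pow_le_pow_right hle hq
    set M : Submodule D A :=
      { carrier := {x | ∀ q ∈ P ^ n, q • x = 0}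
        add_mem' := fun ha hb => by
          intro q hq
          rw [smul_add, ha q hq, hb q hq, add_zero]
        zero_mem' := fun q _ => smul_zero q
        smul_mem' := fun e x hx => by
          intro q hq
          rw [smul_smul, mul_comm, ← smul_smul, hx q hq, smul_zero] } with hM
    set CM : Submodule D A := C ⊓ M with hCM
    set W : Submodule D A := M ⊓ CM.comap πm with hW
    have hCMW : CM ≤ W := by
      intro x hx
      obtain ⟨hx1, hx2⟩ := Submodule.mem_inf.mp hx
      refine Submodule.mem_inf.mpr ⟨hx2, Submodule.mem_comap.mpr ?_⟩
      show π • x ∈ CM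
      exact Submodule.mem_inf.mpr ⟨Submodule.smul_mem _ π hx1, Submodule.smul_mem _ π hx2⟩
    have hchain : Stmt13Aux.SubChain CM W l (fun j => g j ⊓ W) := by
      constructor
      · intro j hj
        refine lt_of_le_of_ne (inf_le_inf_right W (hg.1 j hj).le) ?_
        intro heq
        have hmem : Sel j ∈ g (j + 1) ⊓ W := by
          refine Submodule.mem_inf.mpr ⟨hSel2 j hj, Submodule.mem_inf.mpr ⟨?_, ?_⟩⟩
          · intro q hq; exact hSelM j hj q hq
          · refine Submodule.mem_comap.mpr ?_
            show π • Sel j ∈ CM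
            refine Submodule.mem_inf.mpr ⟨hSel1 j hj π hπP, ?_⟩
            show π • Sel j ∈ M
            refine Submodule.smul_mem _ π ?_
            intro q hq; exact hSelM j hj q hq
        have heq' : g j ⊓ W = g (j + 1) ⊓ W := heq
        rw [← heq'] at hmem
        exact hSel3 j hj (Submodule.mem_inf.mp hmem).1
      · intro j hj
        exact ⟨le_inf (inf_le_left.trans (hg.2 j hj).1) hCMW, inf_le_right⟩
    obtain ⟨g₂, hg₂⟩ := Stmt13Aux.claim P π hπP n M CM inf_le_right
      (fun x hx q hq => hx q hq) l _ hchain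
    have hMker : M ⊓ LinearMap.ker πm ≤ Ssoc := by
      intro x hx
      obtain ⟨hxM, hxk⟩ := Submodule.mem_inf.mp hx
      intro p hp
      obtain ⟨a, ha, q, hq, hpq⟩ := Submodule.mem_sup.mp (hπspan n hp)
      obtain ⟨c, rfl⟩ := Ideal.mem_span_singleton'.mp ha
      have hπx : π • x = 0 := LinearMap.mem_ker.mp hxk
      calc p • x = (c * π + q) • x := by rw [hpq]
      _ = (c * π) • x + q • x := add_smul _ _ _
      _ = c • (π • x) + q • x := by rw [mul_smul]
      _ = 0 := by rw [hπx, smul_zero, hxM q hq, add_zero]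
    exact hd l g₂ (hg₂.weaken le_rfl hMker)
  -- the stabilizing sequence
  set Z : ℕ → Submodule D A := fun i => C ⊔ (Fo i ⊓ Csat) with hZ
  have hZanti : ∀ i j, i ≤ j → Z j ≤ Z i :=
    fun i j h => sup_le_sup_left (inf_le_inf_right _ (hmono i j h)) C
  have hZb : ∀ i, C ≤ Z i ∧ Z i ≤ C ⊔ Csat :=
    fun i => ⟨le_sup_left, sup_le le_sup_left (inf_le_right.trans le_sup_right)⟩
  obtain ⟨i₀, hi₀⟩ := Stmt13Aux.antitone_stabilizes hZanti hZb d hsat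
  have hZC : Z i₀ ≤ C := by
    refine le_iInf ?_
    intro j
    rcases le_total i₀ j with h | h
    · rw [← hi₀ j h]
      exact sup_le (hCle j) inf_le_left
    · exact (hZanti j i₀ h).trans (sup_le (hCle j) inf_le_left)
  have hymem : y i₀ ∈ Z i₀ :=
    (le_sup_right : Fo i₀ ⊓ Csat ≤ Z i₀) (Submodule.mem_inf.mpr ⟨hy1 i₀, hy3 i₀⟩)
  exact hy2 i₀ (hZC hymem)
end
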